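/- Let A₁ = ℤ[X,Y,Z]/(X(X+2Y+3Z), Y(X+2Y+3Z), Y(X+Y+Z), Z²(X+Y+Z), Z²X) and A₂ = ℤ[X,Y,Z]/(X(X+2Y+3Z), Y(X+2Y+3Z), Y(X+Y+Z), Z(Y+Z)(X+Y+Z), ZX(Y+Z)), both graded with generators in degree 2. Then the ℤ-algebra map determined by X ↦ X+Y, Y ↦ -Y, Z ↦ Y+Z induces a graded ring isomorphism A₁ → A₂. -/
import Mathlib


open MvPolynomial

/-- The defining ideal of `A₁ = ℤ[X,Y,Z]/(X(X+2Y+3Z), Y(X+2Y+3Z), Y(X+Y+Z),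
Z²(X+Y+Z), Z²X)`, with `X = X 0`, `Y = X 1`, `Z = X 2`. -/
noncomputable def idealA1 : Ideal (MvPolynomial (Fin 3) ℤ) :=
  Ideal.span {X 0 * (X 0 + 2 * X 1 + 3 * X 2), X 1 * (X 0 + 2 * X 1 + 3 * X 2),
    X 1 * (X 0 + X 1 + X 2), X 2 ^ 2 * (X 0 + X 1 + X 2), X 2 ^ 2 * X 0}

/-- The defining ideal of `A₂ = ℤ[X,Y,Z]/(X(X+2Y+3Z), Y(X+2Y+3Z), Y(X+Y+Z),
Z(Y+Z)(X+Y+Z), ZX(Y+Z))`. -/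
noncomputable def idealA2 : Ideal (MvPolynomial (Fin 3) ℤ) :=
  Ideal.span {X 0 * (X 0 + 2 * X 1 + 3 * X 2), X 1 * (X 0 + 2 * X 1 + 3 * X 2),
    X 1 * (X 0 + X 1 + X 2), X 2 * (X 1 + X 2) * (X 0 + X 1 + X 2),
    X 2 * X 0 * (X 1 + X 2)}

/-- The substitution `X ↦ X + Y`, `Y ↦ -Y`, `Z ↦ Y + Z`. -/
noncomputable def subMap : MvPolynomial (Fin 3) ℤ →ₐ[ℤ] MvPolynomial (Fin 3) ℤ :=
  aeval ![X 0 + X 1, - X 1, X 1 + X 2]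

lemma subMap_subMap (p : MvPolynomial (Fin 3) ℤ) : subMap (subMap p) = p := by
  have h : subMap.comp subMap = AlgHom.id ℤ (MvPolynomial (Fin 3) ℤ) := by
    apply MvPolynomial.algHom_ext
    intro i
    fin_cases i <;> simp [subMap] <;> ring
  have := congrArg (fun f : MvPolynomial (Fin 3) ℤ →ₐ[ℤ] MvPolynomial (Fin 3) ℤ => f p) h
  simpa using this

-- generators of idealA2 are in idealA2
lemma mem2 (q : MvPolynomial (Fin 3) ℤ)
    (hq : q ∈ ({X 0 * (X 0 + 2 * X 1 + 3 * X 2), X 1 * (X 0 + 2 * X 1 + 3 * X 2),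
      X 1 * (X 0 + X 1 + X 2), X 2 * (X 1 + X 2) * (X 0 + X 1 + X 2),
      X 2 * X 0 * (X 1 + X 2)} : Set (MvPolynomial (Fin 3) ℤ))) : q ∈ idealA2 :=
  Ideal.subset_span hq

lemma mem1 (q : MvPolynomial (Fin 3) ℤ)
    (hq : q ∈ ({X 0 * (X 0 + 2 * X 1 + 3 * X 2), X 1 * (X 0 + 2 * X 1 + 3 * X 2),
      X 1 * (X 0 + X 1 + X 2), X 2 ^ 2 * (X 0 + X 1 + X 2),
      X 2 ^ 2 * X 0} : Set (MvPolynomial (Fin 3) ℤ))) : q ∈ idealA1 :=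
  Ideal.subset_span hq

lemma map1 : ∀ p ∈ idealA1, subMap p ∈ idealA2 := by
  have h : idealA1 ≤ idealA2.comap subMap.toRingHom := by
    rw [idealA1, Ideal.span_le]
    intro q hq
    simp only [Set.mem_insert_iff, Set.mem_singleton_iff] at hq
    rcases hq with rfl | rfl | rfl | rfl | rfl <;>
      refine SetLike.mem_coe.mpr (Ideal.mem_comap.mpr ?_)
    · have : subMap (X 0 * (X 0 + 2 * X 1 + 3 * X 2)) =
        X 0 * (X 0 + 2 * X 1 + 3 * X 2) + X 1 * (X 0 + 2 * X 1 + 3 * X 2) := by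
        simp only [subMap, map_mul, map_add, map_pow, map_ofNat, aeval_X, Matrix.cons_val_zero,
          Matrix.cons_val_one, Matrix.head_cons, Matrix.cons_val_two, Matrix.tail_cons]
        ring
      simp only [AlgHom.toRingHom_eq_coe, RingHom.coe_coe]
      rw [this]
      exact add_mem (mem2 _ (by simp)) (mem2 _ (by simp))
    · have : subMap (X 1 * (X 0 + 2 * X 1 + 3 * X 2)) =
        (-1 : MvPolynomial (Fin 3) ℤ) * (X 1 * (X 0 + 2 * X 1 + 3 * X 2)) := by
        simp only [subMap, map_mul, map_add, map_pow, map_ofNat, aeval_X, Matrix.cons_val_zero,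
          Matrix.cons_val_one, Matrix.head_cons, Matrix.cons_val_two, Matrix.tail_cons]
        ring
      simp only [AlgHom.toRingHom_eq_coe, RingHom.coe_coe]
      rw [this]
      exact Ideal.mul_mem_left _ _ (mem2 _ (by simp))
    · have : subMap (X 1 * (X 0 + X 1 + X 2)) =
        (-1 : MvPolynomial (Fin 3) ℤ) * (X 1 * (X 0 + X 1 + X 2)) := by
        simp only [subMap, map_mul, map_add, map_pow, map_ofNat, aeval_X, Matrix.cons_val_zero,
          Matrix.cons_val_one, Matrix.head_cons, Matrix.cons_val_two, Matrix.tail_cons]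
        ring
      simp only [AlgHom.toRingHom_eq_coe, RingHom.coe_coe]
      rw [this]
      exact Ideal.mul_mem_left _ _ (mem2 _ (by simp))
    · have : subMap (X 2 ^ 2 * (X 0 + X 1 + X 2)) =
        (X 1 + X 2) * (X 1 * (X 0 + X 1 + X 2))
          + X 2 * (X 1 + X 2) * (X 0 + X 1 + X 2) := by
        simp only [subMap, map_mul, map_add, map_pow, map_ofNat, aeval_X, Matrix.cons_val_zero,
          Matrix.cons_val_one, Matrix.head_cons, Matrix.cons_val_two, Matrix.tail_cons]
        ring
      simp only [AlgHom.toRingHom_eq_coe, RingHom.coe_coe]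
      rw [this]
      exact add_mem (Ideal.mul_mem_left _ _ (mem2 _ (by simp))) (mem2 _ (by simp))
    · have : subMap (X 2 ^ 2 * X 0) =
        (X 1 + X 2) * (X 1 * (X 0 + X 1 + X 2)) + X 2 * X 0 * (X 1 + X 2) := by
        simp only [subMap, map_mul, map_add, map_pow, map_ofNat, aeval_X, Matrix.cons_val_zero,
          Matrix.cons_val_one, Matrix.head_cons, Matrix.cons_val_two, Matrix.tail_cons]
        ring
      simp only [AlgHom.toRingHom_eq_coe, RingHom.coe_coe]
      rw [this]
      exact add_mem (Ideal.mul_mem_left _ _ (mem2 _ (by simp))) (mem2 _ (by simp))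
  exact fun p hp => h hp

lemma map2 : ∀ p ∈ idealA2, subMap p ∈ idealA1 := by
  have h : idealA2 ≤ idealA1.comap subMap.toRingHom := by
    rw [idealA2, Ideal.span_le]
    intro q hq
    simp only [Set.mem_insert_iff, Set.mem_singleton_iff] at hq
    rcases hq with rfl | rfl | rfl | rfl | rfl <;>
      refine SetLike.mem_coe.mpr (Ideal.mem_comap.mpr ?_)
    · have : subMap (X 0 * (X 0 + 2 * X 1 + 3 * X 2)) =
        X 0 * (X 0 + 2 * X 1 + 3 * X 2) + X 1 * (X 0 + 2 * X 1 + 3 * X 2) := by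
        simp only [subMap, map_mul, map_add, map_pow, map_ofNat, aeval_X, Matrix.cons_val_zero,
          Matrix.cons_val_one, Matrix.head_cons, Matrix.cons_val_two, Matrix.tail_cons]
        ring
      simp only [AlgHom.toRingHom_eq_coe, RingHom.coe_coe]
      rw [this]
      exact add_mem (mem1 _ (by simp)) (mem1 _ (by simp))
    · have : subMap (X 1 * (X 0 + 2 * X 1 + 3 * X 2)) =
        (-1 : MvPolynomial (Fin 3) ℤ) * (X 1 * (X 0 + 2 * X 1 + 3 * X 2)) := by
        simp only [subMap, map_mul, map_add, map_pow, map_ofNat, aeval_X, Matrix.cons_val_zero,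
          Matrix.cons_val_one, Matrix.head_cons, Matrix.cons_val_two, Matrix.tail_cons]
        ring
      simp only [AlgHom.toRingHom_eq_coe, RingHom.coe_coe]
      rw [this]
      exact Ideal.mul_mem_left _ _ (mem1 _ (by simp))
    · have : subMap (X 1 * (X 0 + X 1 + X 2)) =
        (-1 : MvPolynomial (Fin 3) ℤ) * (X 1 * (X 0 + X 1 + X 2)) := by
        simp only [subMap, map_mul, map_add, map_pow, map_ofNat, aeval_X, Matrix.cons_val_zero,
          Matrix.cons_val_one, Matrix.head_cons, Matrix.cons_val_two, Matrix.tail_cons]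
        ring
      simp only [AlgHom.toRingHom_eq_coe, RingHom.coe_coe]
      rw [this]
      exact Ideal.mul_mem_left _ _ (mem1 _ (by simp))
    · have : subMap (X 2 * (X 1 + X 2) * (X 0 + X 1 + X 2)) =
        X 2 * (X 1 * (X 0 + X 1 + X 2)) + X 2 ^ 2 * (X 0 + X 1 + X 2) := by
        simp only [subMap, map_mul, map_add, map_pow, map_ofNat, aeval_X, Matrix.cons_val_zero,
          Matrix.cons_val_one, Matrix.head_cons, Matrix.cons_val_two, Matrix.tail_cons]
        ring
      simp only [AlgHom.toRingHom_eq_coe, RingHom.coe_coe]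
      rw [this]
      exact add_mem (Ideal.mul_mem_left _ _ (mem1 _ (by simp))) (mem1 _ (by simp))
    · have : subMap (X 2 * X 0 * (X 1 + X 2)) =
        X 2 * (X 1 * (X 0 + X 1 + X 2)) + X 2 ^ 2 * X 0 := by
        simp only [subMap, map_mul, map_add, map_pow, map_ofNat, aeval_X, Matrix.cons_val_zero,
          Matrix.cons_val_one, Matrix.head_cons, Matrix.cons_val_two, Matrix.tail_cons]
        ring
      simp only [AlgHom.toRingHom_eq_coe, RingHom.coe_coe]
      rw [this]
      exact add_mem (Ideal.mul_mem_left _ _ (mem1 _ (by simp))) (mem1 _ (by simp))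
  exact fun p hp => h hp

noncomputable def fwd : (MvPolynomial (Fin 3) ℤ ⧸ idealA1) →+* (MvPolynomial (Fin 3) ℤ ⧸ idealA2) :=
  Ideal.Quotient.lift idealA1 ((Ideal.Quotient.mk idealA2).comp subMap.toRingHom)
    (fun a ha => by
      simp only [RingHom.comp_apply, AlgHom.toRingHom_eq_coe, RingHom.coe_coe,
        Ideal.Quotient.eq_zero_iff_mem]
      exact map1 a ha)

noncomputable def bwd : (MvPolynomial (Fin 3) ℤ ⧸ idealA2) →+* (MvPolynomial (Fin 3) ℤ ⧸ idealA1) :=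
  Ideal.Quotient.lift idealA2 ((Ideal.Quotient.mk idealA1).comp subMap.toRingHom)
    (fun a ha => by
      simp only [RingHom.comp_apply, AlgHom.toRingHom_eq_coe, RingHom.coe_coe,
        Ideal.Quotient.eq_zero_iff_mem]
      exact map2 a ha)

lemma fwd_mk (p : MvPolynomial (Fin 3) ℤ) :
    fwd (Ideal.Quotient.mk idealA1 p) = Ideal.Quotient.mk idealA2 (subMap p) := rfl

lemma bwd_mk (p : MvPolynomial (Fin 3) ℤ) :
    bwd (Ideal.Quotient.mk idealA2 p) = Ideal.Quotient.mk idealA1 (subMap p) := rfl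

/-- The substitution `X ↦ X+Y, Y ↦ -Y, Z ↦ Y+Z` induces a (graded) ring isomorphism
`A₁ → A₂`. -/
theorem stmt_15 :
    ∃ e : (MvPolynomial (Fin 3) ℤ ⧸ idealA1) ≃+* (MvPolynomial (Fin 3) ℤ ⧸ idealA2),
      ∀ p, e (Ideal.Quotient.mk idealA1 p) = Ideal.Quotient.mk idealA2 (subMap p) := by
  have h1 : fwd.comp bwd = RingHom.id _ := by
    refine RingHom.ext fun x => ?_
    obtain ⟨p, rfl⟩ := Ideal.Quotient.mk_surjective x
    simp [RingHom.comp_apply, fwd_mk, bwd_mk, subMap_subMap]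
  have h2 : bwd.comp fwd = RingHom.id _ := by
    refine RingHom.ext fun x => ?_
    obtain ⟨p, rfl⟩ := Ideal.Quotient.mk_surjective x
    simp [RingHom.comp_apply, fwd_mk, bwd_mk, subMap_subMap]
  exact ⟨RingEquiv.ofRingHom fwd bwd h1 h2, fun p => fwd_mk p⟩
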